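/- Let $S \subset \mathbb{R}^3$ be bounded measurable with $m = \mu(S) > 0$ satisfying the Lipschitz shift condition: $\mu(S \triangle (S+h)) \le C\|h\|$ for $\|h\| < h_0$. Let $u$ satisfy $\|u\|_{L^2(0,T;L^\infty)} < \infty$ and $\|u\|_{L^2(Q_T)} < \infty$. If $T_0 \in (0, T]$ satisfies $T_0 < \min\{ m h_0^2 / (4\|u\|^2_{L^2(Q_T)}),\ m^2/(C^2 \|u\|^2_{L^2(0,T;L^\infty)}) \}$, then for each $z_0 \in \mathbb{R}^3$ the integral equation $$w(t) = z_0 + \frac{1}{m} \int_0^t \int_{S + w(\tau)} u(x,\tau)\,dx\,d\tau$$ has a unique solution $w \in C([0,T_0]; \mathbb{R}^3)$ with $\sup_t \|w(t) - z_0\| \le h_0/2$. -/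

import Mathlib

/-!
The right-hand side `F τ a = ⨍_{S + a} u(·, τ)` is, by Cauchy–Schwarz in space, bounded by
`√(‖u(·, τ)‖²_{L²} / m)`, and it is Lipschitz in `a` with constant `C g(τ) / m`, because two
averages over translates of `S` differ only on their symmetric difference. Cauchy–Schwarz in
time and the smallness of `T₀` then make the Picard map `w ↦ z₀ + ∫₀ᵗ F τ (w τ) dτ` send the
curves of `C([0, T₀])` staying in the closed ball of radius `h₀ / 2` about `z₀` into themselves
and contract with constant `(C / m) √(T₀ ∫₀ᵀ g²) < 1`, so Banach's fixed point theorem applies.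
-/

open MeasureTheory Set Metric

section SetIntegral

variable {α G : Type*} [MeasurableSpace α] {μ : Measure α}
  [NormedAddCommGroup G] [NormedSpace ℝ G]

theorem norm_setIntegral_sub_setIntegral_le {f : α → G} {A B : Set α} {M : ℝ}
    (hA : MeasurableSet A) (hB : MeasurableSet B) (hA_fin : μ A ≠ ⊤) (hB_fin : μ B ≠ ⊤)
    (hfA : IntegrableOn f A μ) (hfB : IntegrableOn f B μ) (hM : ∀ x, ‖f x‖ ≤ M) :
    ‖∫ x in A, f x ∂μ - ∫ x in B, f x ∂μ‖ ≤ M * μ.real (symmDiff A B) := by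
  have hsplit : ∫ x in A, f x ∂μ - ∫ x in B, f x ∂μ
      = ∫ x in A \ B, f x ∂μ - ∫ x in B \ A, f x ∂μ := by
    rw [← integral_inter_add_sdiff hB hfA, ← integral_inter_add_sdiff hA hfB, inter_comm]
    abel
  have hbound : ∀ {D : Set α}, μ D ≠ ⊤ → ∀ D', ‖∫ x in D \ D', f x ∂μ‖ ≤ M * μ.real (D \ D') :=
    fun hD _ => norm_setIntegral_le_of_norm_le_const
      ((measure_mono sdiff_subset).trans_lt hD.lt_top) fun x _ => hM x
  rw [hsplit, measureReal_symmDiff_eq hA hB hA_fin hB_fin, mul_add]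
  exact (norm_sub_le _ _).trans (add_le_add (hbound hA_fin B) (hbound hB_fin A))

theorem integral_le_sqrt_measureReal_mul_integral_sq [IsFiniteMeasure μ] {f : α → ℝ}
    (hf : AEStronglyMeasurable f μ) (hf2 : Integrable (fun x => f x ^ 2) μ) :
    ∫ x, f x ∂μ ≤ √(μ.real univ * ∫ x, f x ^ 2 ∂μ) := by
  have hpq : Real.HolderConjugate 2 2 := Real.HolderConjugate.two_two
  have hf_Lp : MemLp (fun x => |f x|) (ENNReal.ofReal 2) μ := by
    rw [ENNReal.ofReal_ofNat,
      memLp_two_iff_integrable_sq (continuous_abs.comp_aestronglyMeasurable hf)]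
    simpa only [sq_abs] using hf2
  have holder := integral_mul_le_Lp_mul_Lq_of_nonneg hpq
    (Filter.Eventually.of_forall fun _ => zero_le_one)
    (Filter.Eventually.of_forall fun x => abs_nonneg (f x))
    (memLp_const (1 : ℝ)) hf_Lp
  simp only [one_mul, integral_const, smul_eq_mul, one_pow, mul_one, Real.rpow_two,
    sq_abs] at holder
  rw [Real.sqrt_mul measureReal_nonneg, Real.sqrt_eq_rpow, Real.sqrt_eq_rpow]
  exact (le_abs_self _).trans (abs_integral_le_integral_abs.trans holder)

theorem integrable_of_integrable_sq [IsFiniteMeasure μ] {f : α → ℝ}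
    (hf : AEStronglyMeasurable f μ) (hf2 : Integrable (fun x => f x ^ 2) μ) : Integrable f μ :=
  ((memLp_two_iff_integrable_sq hf).2 hf2).integrable one_le_two

theorem integrable_sqrt [IsFiniteMeasure μ] {f : α → ℝ} (hf : AEStronglyMeasurable f μ)
    (hf_int : Integrable f μ) (hf_nonneg : ∀ x, 0 ≤ f x) : Integrable (fun x => √(f x)) μ :=
  integrable_of_integrable_sq (Real.continuous_sqrt.comp_aestronglyMeasurable hf)
    (hf_int.congr (Filter.Eventually.of_forall fun x => (Real.sq_sqrt (hf_nonneg x)).symm))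

theorem setIntegral_le_sqrt_measureReal_mul_setIntegral_sq {f : α → ℝ} {s t : Set α}
    (hst : s ⊆ t) (hs : μ s ≠ ⊤) (hf : AEStronglyMeasurable f (μ.restrict s))
    (hf2 : IntegrableOn (fun x => f x ^ 2) t μ) :
    ∫ x in s, f x ∂μ ≤ √(μ.real s * ∫ x in t, f x ^ 2 ∂μ) := by
  have : IsFiniteMeasure (μ.restrict s) := isFiniteMeasure_restrict.2 hs
  refine (integral_le_sqrt_measureReal_mul_integral_sq hf (hf2.mono_set hst)).trans ?_
  rw [measureReal_restrict_apply_univ]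
  exact Real.sqrt_le_sqrt (mul_le_mul_of_nonneg_left (setIntegral_mono_set hf2
    (Filter.Eventually.of_forall fun x => sq_nonneg (f x)) hst.eventuallyLE) measureReal_nonneg)

theorem norm_setIntegral_le_sqrt_measureReal_mul_integral_sq {f : α → G} {A : Set α}
    (hA : μ A ≠ ⊤) (hf : AEStronglyMeasurable f μ) (hf2 : Integrable (fun x => ‖f x‖ ^ 2) μ) :
    ‖∫ x in A, f x ∂μ‖ ≤ √(μ.real A * ∫ x, ‖f x‖ ^ 2 ∂μ) := by
  simpa only [Measure.restrict_univ] using (norm_integral_le_integral_norm _).trans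
    (setIntegral_le_sqrt_measureReal_mul_setIntegral_sq (subset_univ A) hA hf.norm.restrict
      hf2.integrableOn)

theorem norm_setIntegral_le_setIntegral_of_subset {g : α → G} {φ : α → ℝ} {s t : Set α}
    (hts : t ⊆ s) (hφ : IntegrableOn φ s μ) (hg : ∀ᵐ x ∂μ.restrict s, ‖g x‖ ≤ φ x) :
    ‖∫ x in t, g x ∂μ‖ ≤ ∫ x in s, φ x ∂μ :=
  (norm_integral_le_of_norm_le (hφ.mono_set hts)
    (ae_restrict_of_ae_restrict_of_subset hts hg)).trans
    (setIntegral_mono_set hφ (hg.mono fun _ hx => (norm_nonneg _).trans hx) hts.eventuallyLE)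

end SetIntegral

section Translates

variable {E : Type*} [NormedAddCommGroup E]

theorem symmDiff_image_add_right (S : Set E) (a b : E) :
    symmDiff ((· + a) '' S) ((· + b) '' S) = (· + a) '' symmDiff S ((· + (b - a)) '' S) := by
  rw [image_symmDiff (add_left_injective a), image_image]
  simp only [add_assoc, sub_add_cancel]

variable [MeasurableSpace E] [BorelSpace E] {μ : Measure E} [μ.IsAddRightInvariant]

theorem measure_image_add_right (S : Set E) (a : E) : μ ((· + a) '' S) = μ S := by
  rw [image_add_right, measure_preimage_add_right]

variable [NormedSpace ℝ E]

/-- Split `h` into two halves, each strictly shorter than `h₀`. -/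
theorem measure_symmDiff_image_add_le_of_norm_le {S : Set E} {C h₀ : ℝ} (hC : 0 ≤ C)
    (hh₀ : 0 < h₀)
    (hshift : ∀ h : E, ‖h‖ < h₀ → μ (symmDiff S ((· + h) '' S)) ≤ ENNReal.ofReal (C * ‖h‖))
    {h : E} (hh : ‖h‖ ≤ h₀) :
    μ (symmDiff S ((· + h) '' S)) ≤ ENNReal.ofReal (C * ‖h‖) := by
  set c : E := (2 : ℝ)⁻¹ • h
  have hc : ‖c‖ = ‖h‖ / 2 := by simp only [c, norm_smul, norm_inv, Real.norm_ofNat]; ring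
  have hc_lt : ‖c‖ < h₀ := by rw [hc]; linarith [norm_nonneg h]
  have hhc : h - c = c := by simp only [c]; module
  calc μ (symmDiff S ((· + h) '' S))
      ≤ μ (symmDiff S ((· + c) '' S)) + μ (symmDiff ((· + c) '' S) ((· + h) '' S)) :=
        measure_symmDiff_le _ _ _
    _ = μ (symmDiff S ((· + c) '' S)) + μ (symmDiff S ((· + c) '' S)) := by
        rw [symmDiff_image_add_right, measure_image_add_right, hhc]
    _ ≤ ENNReal.ofReal (C * ‖c‖) + ENNReal.ofReal (C * ‖c‖) :=
        add_le_add (hshift c hc_lt) (hshift c hc_lt)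
    _ = ENNReal.ofReal (C * ‖h‖) := by
        rw [← ENNReal.ofReal_add (by positivity) (by positivity), hc]; ring_nf

theorem measure_symmDiff_translates_le {S : Set E} {C h₀ : ℝ} (hC : 0 ≤ C) (hh₀ : 0 < h₀)
    (hshift : ∀ h : E, ‖h‖ < h₀ → μ (symmDiff S ((· + h) '' S)) ≤ ENNReal.ofReal (C * ‖h‖))
    {a b : E} (hab : ‖b - a‖ ≤ h₀) :
    μ (symmDiff ((· + a) '' S) ((· + b) '' S)) ≤ ENNReal.ofReal (C * ‖b - a‖) := by
  rw [symmDiff_image_add_right, measure_image_add_right]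
  exact measure_symmDiff_image_add_le_of_norm_le hC hh₀ hshift hab

end Translates

section TranslateAverage

variable {E G : Type*} [NormedAddCommGroup E] [MeasurableSpace E] [BorelSpace E]
  {μ : Measure E} [μ.IsAddRightInvariant] [NormedAddCommGroup G] [NormedSpace ℝ G] {S : Set E}

theorem setAverage_image_add_right (f : E → G) (a : E) :
    ⨍ x in (· + a) '' S, f x ∂μ = (μ.real S)⁻¹ • ∫ x in (· + a) '' S, f x ∂μ := by
  rw [setAverage_eq, measureReal_def, measure_image_add_right, measureReal_def]

theorem norm_setAverage_image_add_right_le (hS : μ S ≠ ⊤) {f : E → G}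
    (hf : AEStronglyMeasurable f μ) (hf2 : Integrable (fun x => ‖f x‖ ^ 2) μ) (a : E) :
    ‖⨍ x in (· + a) '' S, f x ∂μ‖ ≤ √((∫ x, ‖f x‖ ^ 2 ∂μ) / μ.real S) := by
  have hCS := norm_setIntegral_le_sqrt_measureReal_mul_integral_sq
    (by rwa [measure_image_add_right]) hf hf2 (A := (· + a) '' S)
  rw [measureReal_def, measure_image_add_right, ← measureReal_def] at hCS
  rw [setAverage_image_add_right, norm_smul, norm_inv, Real.norm_of_nonneg measureReal_nonneg]
  calc (μ.real S)⁻¹ * ‖∫ x in (· + a) '' S, f x ∂μ‖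
      ≤ (μ.real S)⁻¹ * √(μ.real S * ∫ x, ‖f x‖ ^ 2 ∂μ) := by gcongr
    _ = √((∫ x, ‖f x‖ ^ 2 ∂μ) / μ.real S) := by
      rcases (measureReal_nonneg (μ := μ) (s := S)).eq_or_lt with h | h
      · simp [← h]
      rw [Real.sqrt_div' _ h.le, Real.sqrt_mul h.le]
      have := Real.sq_sqrt h.le
      field_simp
      rw [this]

variable [NormedSpace ℝ E]

theorem norm_setAverage_image_add_right_sub_le (hS : MeasurableSet S) (hS_fin : μ S ≠ ⊤)
    {C h₀ : ℝ} (hC : 0 ≤ C) (hh₀ : 0 < h₀)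
    (hshift : ∀ h : E, ‖h‖ < h₀ → μ (symmDiff S ((· + h) '' S)) ≤ ENNReal.ofReal (C * ‖h‖))
    {f : E → G} (hf : AEStronglyMeasurable f μ) {M : ℝ} (hM : ∀ x, ‖f x‖ ≤ M) {a b : E}
    (hab : ‖b - a‖ ≤ h₀) :
    ‖⨍ x in (· + a) '' S, f x ∂μ - ⨍ x in (· + b) '' S, f x ∂μ‖
      ≤ M * (C / μ.real S) * ‖a - b‖ := by
  have hmeas : ∀ c : E, MeasurableSet ((· + c) '' S) := fun c => by
    rw [image_add_right]
    exact hS.preimage (measurable_add_const _)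
  have hfin : ∀ c : E, μ ((· + c) '' S) ≠ ⊤ := fun c => by rwa [measure_image_add_right]
  have hint : ∀ c : E, IntegrableOn f ((· + c) '' S) μ := fun c =>
    Measure.integrableOn_of_bounded (hfin c) hf (Filter.Eventually.of_forall hM)
  have hM_nonneg : 0 ≤ M := (norm_nonneg _).trans (hM 0)
  have hdiff := norm_setIntegral_sub_setIntegral_le (hmeas a) (hmeas b) (hfin a) (hfin b)
    (hint a) (hint b) hM
  have hsymm : μ.real (symmDiff ((· + a) '' S) ((· + b) '' S)) ≤ C * ‖b - a‖ :=
    ENNReal.toReal_le_of_le_ofReal (by positivity)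
      (measure_symmDiff_translates_le hC hh₀ hshift hab)
  rw [setAverage_image_add_right, setAverage_image_add_right, ← smul_sub, norm_smul, norm_inv,
    Real.norm_of_nonneg measureReal_nonneg, norm_sub_rev a b]
  calc (μ.real S)⁻¹ * ‖∫ x in (· + a) '' S, f x ∂μ - ∫ x in (· + b) '' S, f x ∂μ‖
      ≤ (μ.real S)⁻¹ * (M * (C * ‖b - a‖)) := by gcongr; exact hdiff.trans (by gcongr)
    _ = M * (C / μ.real S) * ‖b - a‖ := by ring

variable [SecondCountableTopology E] [SFinite μ]

theorem stronglyMeasurable_setAverage_image_add_right (hS : MeasurableSet S)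
    {u : E → ℝ → E} (hu : Measurable (Function.uncurry u)) {v : ℝ → E} (hv : Measurable v) :
    StronglyMeasurable fun τ => ⨍ x in (· + v τ) '' S, u x τ ∂μ := by
  simp only [setAverage_image_add_right]
  refine StronglyMeasurable.const_smul ?_ _
  -- the moving domain `S + v τ` is the slice at `τ` of a measurable subset of `ℝ × E`
  have hset : MeasurableSet {p : ℝ × E | p.2 + -v p.1 ∈ S} :=
    hS.preimage (measurable_snd.add (hv.comp measurable_fst).neg)
  have hind : StronglyMeasurable
      (Function.uncurry fun τ => {x | x + -v τ ∈ S}.indicator fun x => u x τ) :=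
    ((hu.comp measurable_swap).indicator hset).stronglyMeasurable
  convert hind.integral_prod_right (ν := μ) using 2 with τ
  rw [image_add_right, ← integral_indicator (hS.preimage (measurable_add_const _))]
  rfl

end TranslateAverage

theorem isClosed_setOf_forall_mem_closedBall {X E : Type*} [TopologicalSpace X]
    [PseudoMetricSpace E] (z : E) (r : ℝ) : IsClosed {f : C(X, E) | ∀ p, f p ∈ closedBall z r} := by
  simp only [ofPred_forall]
  exact isClosed_iInter fun p => isClosed_closedBall.preimage (continuous_eval_const p)

section IntegralEquation

variable {E : Type*} [NormedAddCommGroup E]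
  {F : ℝ → E → E} {z₀ : E} {r T₀ : ℝ} {φ L : ℝ → ℝ} {v v' : ℝ → E}

theorem integrableOn_comp_of_mem_closedBall
    (hF_meas : ∀ v : ℝ → E, Continuous v →
      AEStronglyMeasurable (fun τ => F τ (v τ)) (volume.restrict (Icc 0 T₀)))
    (hφ : IntegrableOn φ (Icc 0 T₀))
    (hF_bound : ∀ᵐ τ ∂volume.restrict (Icc 0 T₀), ∀ a ∈ closedBall z₀ r, ‖F τ a‖ ≤ φ τ)
    (hv_cont : Continuous v) (hv : ∀ τ ∈ Icc 0 T₀, v τ ∈ closedBall z₀ r) :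
    IntegrableOn (fun τ => F τ (v τ)) (Icc 0 T₀) :=
  hφ.mono' (hF_meas v hv_cont) <| by
    filter_upwards [hF_bound, ae_restrict_mem measurableSet_Icc] with τ hτ hτ_mem
      using hτ _ (hv τ hτ_mem)

variable [NormedSpace ℝ E]

noncomputable def picard (F : ℝ → E → E) (z₀ : E) (v : ℝ → E) (t : ℝ) : E :=
  z₀ + ∫ τ in Icc 0 t, F τ (v τ)

def IsSolutionInClosedBall (F : ℝ → E → E) (z₀ : E) (r T₀ : ℝ) (w : ℝ → E) : Prop :=
  ContinuousOn w (Icc 0 T₀) ∧ (∀ t ∈ Icc 0 T₀, w t = picard F z₀ w t) ∧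
    ∀ t ∈ Icc 0 T₀, ‖w t - z₀‖ ≤ r

theorem picard_congr (hvv' : EqOn v v' (Icc 0 T₀)) {t : ℝ} (ht : t ≤ T₀) :
    picard F z₀ v t = picard F z₀ v' t := by
  unfold picard
  rw [setIntegral_congr_fun measurableSet_Icc fun τ hτ => by rw [hvv' ⟨hτ.1, hτ.2.trans ht⟩]]

theorem picard_mem_closedBall (hφ : IntegrableOn φ (Icc 0 T₀))
    (hF_bound : ∀ᵐ τ ∂volume.restrict (Icc 0 T₀), ∀ a ∈ closedBall z₀ r, ‖F τ a‖ ≤ φ τ)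
    (hφr : ∫ τ in Icc 0 T₀, φ τ ≤ r) (hv : ∀ τ ∈ Icc 0 T₀, v τ ∈ closedBall z₀ r)
    {t : ℝ} (ht : t ≤ T₀) : picard F z₀ v t ∈ closedBall z₀ r := by
  rw [mem_closedBall, dist_eq_norm, picard, add_sub_cancel_left]
  refine (norm_setIntegral_le_setIntegral_of_subset (Icc_subset_Icc_right ht) hφ ?_).trans hφr
  filter_upwards [hF_bound, ae_restrict_mem measurableSet_Icc] with τ hτ hτ_mem
    using hτ _ (hv τ hτ_mem)

theorem continuousOn_picard
    (hF_meas : ∀ v : ℝ → E, Continuous v →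
      AEStronglyMeasurable (fun τ => F τ (v τ)) (volume.restrict (Icc 0 T₀)))
    (hφ : IntegrableOn φ (Icc 0 T₀))
    (hF_bound : ∀ᵐ τ ∂volume.restrict (Icc 0 T₀), ∀ a ∈ closedBall z₀ r, ‖F τ a‖ ≤ φ τ)
    (hv_cont : Continuous v) (hv : ∀ τ ∈ Icc 0 T₀, v τ ∈ closedBall z₀ r) :
    ContinuousOn (picard F z₀ v) (Icc 0 T₀) :=
  continuousOn_const.add <| intervalIntegral.continuousOn_primitive_Icc <|
    integrableOn_comp_of_mem_closedBall hF_meas hφ hF_bound hv_cont hv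

theorem norm_picard_sub_picard_le
    (hF_meas : ∀ v : ℝ → E, Continuous v →
      AEStronglyMeasurable (fun τ => F τ (v τ)) (volume.restrict (Icc 0 T₀)))
    (hφ : IntegrableOn φ (Icc 0 T₀))
    (hF_bound : ∀ᵐ τ ∂volume.restrict (Icc 0 T₀), ∀ a ∈ closedBall z₀ r, ‖F τ a‖ ≤ φ τ)
    (hL : IntegrableOn L (Icc 0 T₀)) (hL_nonneg : ∀ᵐ τ ∂volume.restrict (Icc 0 T₀), 0 ≤ L τ)
    (hF_lip : ∀ᵐ τ ∂volume.restrict (Icc 0 T₀), ∀ a ∈ closedBall z₀ r, ∀ b ∈ closedBall z₀ r,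
      ‖F τ a - F τ b‖ ≤ L τ * ‖a - b‖)
    (hv_cont : Continuous v) (hv : ∀ τ ∈ Icc 0 T₀, v τ ∈ closedBall z₀ r)
    (hv'_cont : Continuous v') (hv' : ∀ τ ∈ Icc 0 T₀, v' τ ∈ closedBall z₀ r)
    {d : ℝ} (hd : ∀ τ ∈ Icc 0 T₀, ‖v τ - v' τ‖ ≤ d) {t : ℝ} (ht : t ≤ T₀) :
    ‖picard F z₀ v t - picard F z₀ v' t‖ ≤ (∫ τ in Icc 0 T₀, L τ) * d := by
  have hsub : Icc 0 t ⊆ Icc (0 : ℝ) T₀ := Icc_subset_Icc_right ht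
  rw [picard, picard, add_sub_add_left_eq_sub,
    ← integral_sub
      ((integrableOn_comp_of_mem_closedBall hF_meas hφ hF_bound hv_cont hv).mono_set hsub)
      ((integrableOn_comp_of_mem_closedBall hF_meas hφ hF_bound hv'_cont hv').mono_set hsub),
    ← integral_mul_const]
  refine norm_setIntegral_le_setIntegral_of_subset hsub (hL.mul_const d) ?_
  filter_upwards [hF_lip, hL_nonneg, ae_restrict_mem measurableSet_Icc] with τ hτ hLτ hτ_mem
  exact (hτ _ (hv τ hτ_mem) _ (hv' τ hτ_mem)).trans
    (mul_le_mul_of_nonneg_left (hd τ hτ_mem) hLτ)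

theorem exists_unique_isSolutionInClosedBall [CompleteSpace E] (hT₀ : 0 ≤ T₀) (hr : 0 ≤ r)
    (hF_meas : ∀ v : ℝ → E, Continuous v →
      AEStronglyMeasurable (fun τ => F τ (v τ)) (volume.restrict (Icc 0 T₀)))
    (hφ : IntegrableOn φ (Icc 0 T₀))
    (hF_bound : ∀ᵐ τ ∂volume.restrict (Icc 0 T₀), ∀ a ∈ closedBall z₀ r, ‖F τ a‖ ≤ φ τ)
    (hφr : ∫ τ in Icc 0 T₀, φ τ ≤ r)
    (hL : IntegrableOn L (Icc 0 T₀)) (hL_nonneg : ∀ᵐ τ ∂volume.restrict (Icc 0 T₀), 0 ≤ L τ)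
    (hF_lip : ∀ᵐ τ ∂volume.restrict (Icc 0 T₀), ∀ a ∈ closedBall z₀ r, ∀ b ∈ closedBall z₀ r,
      ‖F τ a - F τ b‖ ≤ L τ * ‖a - b‖)
    (hL₁ : ∫ τ in Icc 0 T₀, L τ < 1) :
    ∃ w : ℝ → E, IsSolutionInClosedBall F z₀ r T₀ w ∧
      ∀ w', IsSolutionInClosedBall F z₀ r T₀ w' → EqOn w' w (Icc 0 T₀) := by
  let X := {f : C(Icc 0 T₀, E) // ∀ p, f p ∈ closedBall z₀ r}
  have : CompleteSpace X := (isClosed_setOf_forall_mem_closedBall z₀ r).completeSpace_coe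
  have : Nonempty X := ⟨⟨ContinuousMap.const _ z₀, fun _ => mem_closedBall_self hr⟩⟩
  have hext : ∀ f : X, Continuous (IccExtend hT₀ f.1) ∧
      ∀ τ ∈ Icc 0 T₀, IccExtend hT₀ f.1 τ ∈ closedBall z₀ r :=
    fun f => ⟨f.1.continuous.Icc_extend', fun τ _ => f.2 _⟩
  let Φ : X → X := fun f => ⟨⟨(Icc 0 T₀).domRestrict (picard F z₀ (IccExtend hT₀ f.1)),
      (continuousOn_picard hF_meas hφ hF_bound (hext f).1 (hext f).2).domRestrict⟩,
    fun p => picard_mem_closedBall hφ hF_bound hφr (hext f).2 p.2.2⟩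
  let K : NNReal := ⟨∫ τ in Icc 0 T₀, L τ, integral_nonneg_of_ae (hL_nonneg.mono fun _ h => h)⟩
  have hΦ : ContractingWith K Φ := by
    refine ⟨hL₁, LipschitzWith.of_dist_le_mul fun f f' => ?_⟩
    rw [Subtype.dist_eq, Subtype.dist_eq, ContinuousMap.dist_le (by positivity)]
    refine fun p => (dist_eq_norm _ _).trans_le <|
      norm_picard_sub_picard_le hF_meas hφ hF_bound hL hL_nonneg hF_lip (hext f).1 (hext f).2
        (hext f').1 (hext f').2 (fun τ _ => ?_) p.2.2
    rw [← dist_eq_norm]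
    exact ContinuousMap.dist_apply_le_dist _
  obtain ⟨fp, hfp, hfp_unique⟩ : ∃ fp : X, Function.IsFixedPt Φ fp ∧
      ∀ g, Function.IsFixedPt Φ g → g = fp :=
    ⟨_, hΦ.fixedPoint_isFixedPt, fun _ => hΦ.fixedPoint_unique⟩
  have hfp_apply : ∀ t (ht : t ∈ Icc 0 T₀), IccExtend hT₀ fp.1 t = fp.1 ⟨t, ht⟩ :=
    fun t ht => IccExtend_of_mem hT₀ _ ht
  refine ⟨IccExtend hT₀ fp.1, ⟨(hext fp).1.continuousOn, fun t ht => ?_, fun t ht => ?_⟩, ?_⟩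
  · rw [hfp_apply t ht]
    exact (congrArg (fun g : X => g.1 ⟨t, ht⟩) hfp).symm
  · rw [hfp_apply t ht, ← dist_eq_norm]
    exact fp.2 _
  · rintro w' ⟨hw'_cont, hw'_eq, hw'_mem⟩ t ht
    let W' : X := ⟨⟨(Icc 0 T₀).domRestrict w', hw'_cont.domRestrict⟩,
      fun p => mem_closedBall_iff_norm.2 (hw'_mem p p.2)⟩
    have hW' : Function.IsFixedPt Φ W' := by
      refine Subtype.ext (ContinuousMap.ext fun p => ?_)
      exact (picard_congr (fun τ hτ => IccExtend_of_mem hT₀ _ hτ) p.2.2).trans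
        (hw'_eq p p.2).symm
    rw [hfp_apply t ht, ← hfp_unique W' hW']
    rfl

end IntegralEquation

theorem setIntegral_Icc_le_sqrt_mul_setIntegral_sq {f : ℝ → ℝ} {T₀ T : ℝ} (hT₀ : 0 ≤ T₀)
    (hT : T₀ ≤ T) (hf : AEStronglyMeasurable f (volume.restrict (Icc 0 T₀)))
    (hf2 : IntegrableOn (fun τ => f τ ^ 2) (Icc 0 T)) :
    ∫ τ in Icc 0 T₀, f τ ≤ √(T₀ * ∫ τ in Icc 0 T, f τ ^ 2) := by
  simpa [hT₀] using setIntegral_le_sqrt_measureReal_mul_setIntegral_sq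
    (Icc_subset_Icc_right hT) measure_Icc_lt_top.ne hf hf2

theorem setIntegral_sqrt_div_le_half_of_lt_div {J : ℝ → ℝ} {m h T₀ T : ℝ} (hm : 0 < m)
    (hh : 0 ≤ h) (hT₀ : 0 ≤ T₀) (hT : T₀ ≤ T) (hJ_meas : Measurable J)
    (hJ : IntegrableOn J (Icc 0 T)) (hJ_nonneg : ∀ τ, 0 ≤ J τ)
    (hsmall : T₀ < m * h ^ 2 / (4 * ∫ τ in Icc 0 T, J τ)) :
    ∫ τ in Icc 0 T₀, √(J τ / m) ≤ h / 2 := by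
  have hJ_sq : ∀ τ, √(J τ / m) ^ 2 = J τ / m := fun τ =>
    Real.sq_sqrt (div_nonneg (hJ_nonneg τ) hm.le)
  refine (setIntegral_Icc_le_sqrt_mul_setIntegral_sq hT₀ hT
    (hJ_meas.div_const m).sqrt.aestronglyMeasurable
    (by simp only [hJ_sq]; exact hJ.div_const m)).trans ?_
  simp only [hJ_sq, integral_div]
  set I := ∫ τ in Icc 0 T, J τ
  have hI : 0 ≤ I := setIntegral_nonneg measurableSet_Icc fun τ _ => hJ_nonneg τ
  rcases hI.eq_or_lt with hI | hI
  · rw [← hI, zero_div, mul_zero, Real.sqrt_zero]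
    positivity
  rw [lt_div_iff₀ (by positivity)] at hsmall
  rw [Real.sqrt_le_left (by positivity), mul_div_assoc', div_le_iff₀ hm]
  nlinarith

theorem setIntegral_mul_div_lt_one_of_lt_div {g : ℝ → ℝ} {m C T₀ T : ℝ} (hm : 0 < m) (hC : 0 ≤ C)
    (hT₀ : 0 ≤ T₀) (hT : T₀ ≤ T) (hg_meas : Measurable g)
    (hg2 : IntegrableOn (fun τ => g τ ^ 2) (Icc 0 T))
    (hsmall : T₀ < m ^ 2 / (C ^ 2 * ∫ τ in Icc 0 T, g τ ^ 2)) :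
    ∫ τ in Icc 0 T₀, g τ * (C / m) < 1 := by
  rw [integral_mul_const]
  refine (mul_le_mul_of_nonneg_right (setIntegral_Icc_le_sqrt_mul_setIntegral_sq hT₀ hT
    hg_meas.aestronglyMeasurable hg2) (by positivity)).trans_lt ?_
  set G := ∫ τ in Icc 0 T, g τ ^ 2
  have hG : 0 ≤ G := setIntegral_nonneg measurableSet_Icc fun τ _ => sq_nonneg (g τ)
  rcases (mul_nonneg (sq_nonneg C) hG).eq_or_lt with h | h
  -- division by zero turns `hsmall` into `T₀ < 0`
  · rw [← h, div_zero] at hsmall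
    linarith
  rw [lt_div_iff₀ h] at hsmall
  rw [mul_div_assoc', div_lt_one hm, ← Real.sqrt_sq hC, ← Real.sqrt_mul' _ (sq_nonneg C)]
  exact (Real.sqrt_lt' hm).2 (by linarith)

theorem exists_unique_isSolutionInClosedBall_setAverage {E : Type*} [NormedAddCommGroup E]
    [NormedSpace ℝ E] [CompleteSpace E] [MeasurableSpace E] [BorelSpace E]
    [SecondCountableTopology E] {μ : Measure E} [μ.IsAddRightInvariant] [SFinite μ] {S : Set E}
    (hS : MeasurableSet S) (hm : 0 < μ.real S) {C h₀ T T₀ : ℝ} (hC : 0 ≤ C) (hh₀ : 0 < h₀)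
    (hT₀ : 0 ≤ T₀) (hT₀T : T₀ ≤ T)
    (hshift : ∀ h : E, ‖h‖ < h₀ → μ (symmDiff S ((· + h) '' S)) ≤ ENNReal.ofReal (C * ‖h‖))
    {u : E → ℝ → E} (hu : Measurable (Function.uncurry u)) {g : ℝ → ℝ} (hgm : Measurable g)
    (hg : ∀ t ∈ Icc 0 T, ∀ x, ‖u x t‖ ≤ g t) (hgL2 : IntegrableOn (fun t => g t ^ 2) (Icc 0 T))
    (huL2 : Integrable (fun p : E × ℝ => ‖u p.1 p.2‖ ^ 2) (μ.prod (volume.restrict (Icc 0 T))))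
    (hsmall₁ : T₀ < μ.real S * h₀ ^ 2 / (4 * ∫ τ in Icc 0 T, ∫ x, ‖u x τ‖ ^ 2 ∂μ))
    (hsmall₂ : T₀ < μ.real S ^ 2 / (C ^ 2 * ∫ τ in Icc 0 T, g τ ^ 2)) (z₀ : E) :
    ∃ w : ℝ → E,
      IsSolutionInClosedBall (fun τ a => ⨍ x in (· + a) '' S, u x τ ∂μ) z₀ (h₀ / 2) T₀ w ∧
      ∀ w', IsSolutionInClosedBall (fun τ a => ⨍ x in (· + a) '' S, u x τ ∂μ) z₀ (h₀ / 2) T₀ w' →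
        EqOn w' w (Icc 0 T₀) := by
  have hS_fin : μ S ≠ ⊤ := (ENNReal.toReal_pos_iff.1 hm).2.ne
  have hsub : Icc 0 T₀ ⊆ Icc 0 T := Icc_subset_Icc_right hT₀T
  have hJ_meas : Measurable fun τ => ∫ x, ‖u x τ‖ ^ 2 ∂μ :=
    ((hu.norm.pow_const 2).stronglyMeasurable.integral_prod_left (μ := μ)).measurable
  have hu_slice : ∀ τ, AEStronglyMeasurable (u · τ) μ := fun _ =>
    hu.of_uncurry_right.aestronglyMeasurable
  refine exists_unique_isSolutionInClosedBall (φ := fun τ => √((∫ x, ‖u x τ‖ ^ 2 ∂μ) / μ.real S))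
    (L := fun τ => g τ * (C / μ.real S)) hT₀ (by positivity)
    (fun v hv =>
      (stronglyMeasurable_setAverage_image_add_right hS hu hv.measurable).aestronglyMeasurable)
    (integrable_sqrt (hJ_meas.div_const _).aestronglyMeasurable
      ((IntegrableOn.mono_set huL2.integral_prod_right hsub).div_const _) fun τ => by positivity)
    ?_ (setIntegral_sqrt_div_le_half_of_lt_div hm hh₀.le hT₀ hT₀T hJ_meas
      huL2.integral_prod_right (fun τ => by positivity) hsmall₁)
    ((integrable_of_integrable_sq hgm.aestronglyMeasurable (hgL2.mono_set hsub)).mul_const _) ?_ ?_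
    (setIntegral_mul_div_lt_one_of_lt_div hm hC hT₀ hT₀T hgm hgL2 hsmall₂)
  · filter_upwards [ae_restrict_of_ae_restrict_of_subset hsub huL2.prod_left_ae] with τ hτ a _
    exact norm_setAverage_image_add_right_le hS_fin (hu_slice τ) hτ a
  · filter_upwards [ae_restrict_mem measurableSet_Icc] with τ hτ
    exact mul_nonneg ((norm_nonneg _).trans (hg τ (hsub hτ) 0)) (by positivity)
  · filter_upwards [ae_restrict_mem measurableSet_Icc] with τ hτ a ha b hb
    refine norm_setAverage_image_add_right_sub_le hS hS_fin hC hh₀ hshift (hu_slice τ)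
      (hg τ (hsub hτ)) ?_
    rw [← dist_eq_norm]
    linarith [dist_triangle_right b a z₀, mem_closedBall.1 ha, mem_closedBall.1 hb]

theorem decoupled_position_equation_wellposed_general
    (S : Set (EuclideanSpace ℝ (Fin 3)))
    (hSm : MeasurableSet S) (hm : 0 < (volume S).toReal)
    (C h0 T T0 : ℝ) (hC : 0 < C) (hh0 : 0 < h0) (hT0 : 0 < T0) (hT0T : T0 ≤ T)
    (hshift : ∀ h : EuclideanSpace ℝ (Fin 3), ‖h‖ < h0 →
      volume (symmDiff S ((fun x => x + h) '' S)) ≤ ENNReal.ofReal (C * ‖h‖))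
    (u : EuclideanSpace ℝ (Fin 3) → ℝ → EuclideanSpace ℝ (Fin 3))
    (hu : Measurable (Function.uncurry u))
    (g : ℝ → ℝ) (hgm : Measurable g)
    (hg : ∀ t ∈ Set.Icc (0:ℝ) T, ∀ x, ‖u x t‖ ≤ g t)
    (hgL2 : IntegrableOn (fun t => (g t) ^ 2) (Set.Icc (0:ℝ) T))
    (huL2 : IntegrableOn
      (fun p : (EuclideanSpace ℝ (Fin 3)) × ℝ => ‖u p.1 p.2‖ ^ 2)
      (Set.univ ×ˢ Set.Icc (0:ℝ) T))
    (hT0small : T0 < min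
      ((volume S).toReal * h0 ^ 2 / (4 * ∫ τ in Set.Icc (0:ℝ) T, ∫ x, ‖u x τ‖ ^ 2))
      ((volume S).toReal ^ 2 / (C ^ 2 * ∫ τ in Set.Icc (0:ℝ) T, (g τ) ^ 2)))
    (z0 : EuclideanSpace ℝ (Fin 3)) :
    ∃ w : ℝ → EuclideanSpace ℝ (Fin 3),
      (ContinuousOn w (Set.Icc 0 T0) ∧
        (∀ t ∈ Set.Icc (0:ℝ) T0,
          w t = z0 + ((volume S).toReal)⁻¹ •
            ∫ τ in Set.Icc (0:ℝ) t, ∫ x in (fun y => y + w τ) '' S, u x τ) ∧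
        ∀ t ∈ Set.Icc (0:ℝ) T0, ‖w t - z0‖ ≤ h0 / 2) ∧
      ∀ w' : ℝ → EuclideanSpace ℝ (Fin 3),
        (ContinuousOn w' (Set.Icc 0 T0) ∧
          (∀ t ∈ Set.Icc (0:ℝ) T0,
            w' t = z0 + ((volume S).toReal)⁻¹ •
              ∫ τ in Set.Icc (0:ℝ) t, ∫ x in (fun y => y + w' τ) '' S, u x τ) ∧
          ∀ t ∈ Set.Icc (0:ℝ) T0, ‖w' t - z0‖ ≤ h0 / 2) →
        ∀ t ∈ Set.Icc (0:ℝ) T0, w' t = w t := by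
  rw [IntegrableOn, Measure.volume_eq_prod, ← Measure.prod_restrict, Measure.restrict_univ]
    at huL2
  obtain ⟨w, hw, huniq⟩ := exists_unique_isSolutionInClosedBall_setAverage hSm hm hC.le hh0
    hT0.le hT0T hshift hu hgm hg hgL2 huL2 (lt_min_iff.1 hT0small).1 (lt_min_iff.1 hT0small).2 z0
  simp only [IsSolutionInClosedBall, picard, setAverage_image_add_right, integral_smul,
    measureReal_def] at hw huniq
  exact ⟨w, hw, huniq⟩

/-- Lemma 3.1 of the paper: under the Lipschitz shift condition on the body set `S` and a
smallness condition on `T₀`, the decoupled integral equation for the swimmer position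
`w(t) = z₀ + (1/m) ∫₀ᵗ ∫_{S+w(τ)} u dx dτ` has a unique continuous solution staying
within distance `h₀/2` of `z₀`. -/
theorem decoupled_position_equation_wellposed
    (S : Set (EuclideanSpace ℝ (Fin 3))) (hSb : Bornology.IsBounded S)
    (hSm : MeasurableSet S) (hm : 0 < (volume S).toReal)
    (C h0 T T0 : ℝ) (hC : 0 < C) (hh0 : 0 < h0) (hT0 : 0 < T0) (hT0T : T0 ≤ T)
    (hshift : ∀ h : EuclideanSpace ℝ (Fin 3), ‖h‖ < h0 →
      volume (symmDiff S ((fun x => x + h) '' S)) ≤ ENNReal.ofReal (C * ‖h‖))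
    (u : EuclideanSpace ℝ (Fin 3) → ℝ → EuclideanSpace ℝ (Fin 3))
    (hu : Measurable (Function.uncurry u))
    (g : ℝ → ℝ) (hgm : Measurable g)
    (hg : ∀ t ∈ Set.Icc (0:ℝ) T, ∀ x, ‖u x t‖ ≤ g t)
    (hgL2 : IntegrableOn (fun t => (g t) ^ 2) (Set.Icc (0:ℝ) T))
    (huL2 : IntegrableOn
      (fun p : (EuclideanSpace ℝ (Fin 3)) × ℝ => ‖u p.1 p.2‖ ^ 2)
      (Set.univ ×ˢ Set.Icc (0:ℝ) T))
    (hT0small : T0 < min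
      ((volume S).toReal * h0 ^ 2 / (4 * ∫ τ in Set.Icc (0:ℝ) T, ∫ x, ‖u x τ‖ ^ 2))
      ((volume S).toReal ^ 2 / (C ^ 2 * ∫ τ in Set.Icc (0:ℝ) T, (g τ) ^ 2)))
    (z0 : EuclideanSpace ℝ (Fin 3)) :
    ∃ w : ℝ → EuclideanSpace ℝ (Fin 3),
      (ContinuousOn w (Set.Icc 0 T0) ∧
        (∀ t ∈ Set.Icc (0:ℝ) T0,
          w t = z0 + ((volume S).toReal)⁻¹ •
            ∫ τ in Set.Icc (0:ℝ) t, ∫ x in (fun y => y + w τ) '' S, u x τ) ∧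
        ∀ t ∈ Set.Icc (0:ℝ) T0, ‖w t - z0‖ ≤ h0 / 2) ∧
      ∀ w' : ℝ → EuclideanSpace ℝ (Fin 3),
        (ContinuousOn w' (Set.Icc 0 T0) ∧
          (∀ t ∈ Set.Icc (0:ℝ) T0,
            w' t = z0 + ((volume S).toReal)⁻¹ •
              ∫ τ in Set.Icc (0:ℝ) t, ∫ x in (fun y => y + w' τ) '' S, u x τ) ∧
          ∀ t ∈ Set.Icc (0:ℝ) T0, ‖w' t - z0‖ ≤ h0 / 2) →
        ∀ t ∈ Set.Icc (0:ℝ) T0, w' t = w t :=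
  decoupled_position_equation_wellposed_general S hSm hm C h0 T T0 hC hh0 hT0 hT0T hshift u hu g hgm
    hg hgL2 huL2 hT0small z0
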